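/- arXiv:2006.07568 — 4 statements merged into one kernel-verified Lean document; each statement's English description precedes it below -/
import Mathlib

section
/- Let (x_0, y_0, s_0) and (x_k, y_k, s_k) be primal-dual feasible with x_0, s_0, x_k, s_k > 0 and x_kᵀ s_k ≤ n μ_0 where μ_0 = x_0ᵀ s_0 / n. Then for each component i, x_kᵢ ≤ 2n μ_0 / (min_j s_0ʲ) and s_kᵢ ≤ 2n μ_0 / (min_j x_0ʲ). -/
/-!
Feasibility of both points puts `x_k - x_0` in the kernel of `A` and `s_0 - s_k` in the range of
`Aᵀ`, so the two differences are orthogonal. Expanding gives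
`x_kᵀ s_0 + s_kᵀ x_0 = x_0ᵀ s_0 + x_kᵀ s_k ≤ 2nμ_0`, and both summands on the left are
nonnegative. Finally `x_kᵢ · min_j s_0ʲ ≤ x_kᵀ s_0`, and symmetrically for `s_k`.
-/

open Matrix Finset

section Feasibility

variable {R m n : Type*} [CommRing R] [Fintype m] [Fintype n]

theorem Matrix.transpose_mulVec_dotProduct_eq_zero {A : Matrix m n R} {u : n → R}
    (hu : A *ᵥ u = 0) (v : m → R) : (Aᵀ *ᵥ v) ⬝ᵥ u = 0 := by
  rw [mulVec_transpose, ← dotProduct_mulVec, hu, dotProduct_zero]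

theorem dotProduct_add_dotProduct_eq_of_feasible {A : Matrix m n R} {b : m → R} {c : n → R}
    {x x' s s' : n → R} {y y' : m → R} (hp : A *ᵥ x = b) (hd : Aᵀ *ᵥ y + s = c)
    (hp' : A *ᵥ x' = b) (hd' : Aᵀ *ᵥ y' + s' = c) :
    x' ⬝ᵥ s + s' ⬝ᵥ x = x ⬝ᵥ s + x' ⬝ᵥ s' := by
  have hker : A *ᵥ (x' - x) = 0 := by rw [mulVec_sub, hp, hp', sub_self]
  have hrange : s - s' = Aᵀ *ᵥ (y' - y) := by
    rw [mulVec_sub]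
    linear_combination hd - hd'
  have horth := transpose_mulVec_dotProduct_eq_zero hker (y' - y)
  rw [← hrange] at horth
  simp only [sub_dotProduct, dotProduct_sub] at horth
  simp only [dotProduct_comm s, dotProduct_comm s'] at horth ⊢
  linear_combination horth

end Feasibility

section Bounds

variable {𝕜 n : Type*} [Field 𝕜] [LinearOrder 𝕜] [IsStrictOrderedRing 𝕜] [Fintype n]
  [Nonempty n]

theorem le_div_inf'_of_dotProduct_le {x s : n → 𝕜} {B : 𝕜} (hx : 0 ≤ x) (hs : ∀ j, 0 < s j)
    (hB : x ⬝ᵥ s ≤ B) (i : n) : x i ≤ B / univ.inf' univ_nonempty s := by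
  rw [le_div_iff₀ ((lt_inf'_iff _).mpr fun j _ => hs j)]
  calc x i * univ.inf' univ_nonempty s ≤ x i * s i :=
        mul_le_mul_of_nonneg_left (inf'_le _ (mem_univ i)) (hx i)
    _ ≤ x ⬝ᵥ s :=
        single_le_sum (f := fun j => x j * s j)
          (fun j _ => mul_nonneg (hx j) (hs j).le) (mem_univ i)
    _ ≤ B := hB

end Bounds

/-- Upper bounds on feasible iterates: if `(x_0, y_0, s_0)` and `(x_k, y_k, s_k)` are
primal-dual feasible, strictly positive, and `x_kᵀs_k ≤ n μ_0`, then componentwise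
`x_kᵢ ≤ 2nμ_0 / min_j s_0ʲ` and `s_kᵢ ≤ 2nμ_0 / min_j x_0ʲ`. -/
theorem lp_iterates_upper_bound {m n : ℕ} [NeZero n] (A : Matrix (Fin m) (Fin n) ℝ)
    (b : Fin m → ℝ) (c : Fin n → ℝ)
    (x0 xk s0 sk : Fin n → ℝ) (y0 yk : Fin m → ℝ) (μ0 : ℝ)
    (h0pos : ∀ i, 0 < x0 i ∧ 0 < s0 i) (hkpos : ∀ i, 0 < xk i ∧ 0 < sk i)
    (hp0 : A.mulVec x0 = b) (hd0 : A.transpose.mulVec y0 + s0 = c)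
    (hpk : A.mulVec xk = b) (hdk : A.transpose.mulVec yk + sk = c)
    (hμ0 : μ0 = dotProduct x0 s0 / n)
    (hle : dotProduct xk sk ≤ n * μ0) :
    ∀ i, xk i ≤ 2 * n * μ0 / Finset.univ.inf' Finset.univ_nonempty s0 ∧
      sk i ≤ 2 * n * μ0 / Finset.univ.inf' Finset.univ_nonempty x0 := by
  have hcross := dotProduct_add_dotProduct_eq_of_feasible hp0 hd0 hpk hdk
  have hgap : x0 ⬝ᵥ s0 = n * μ0 := by
    rw [hμ0, mul_div_cancel₀ _ (NeZero.ne (n : ℝ))]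
  have hxk : 0 ≤ xk := fun j => (hkpos j).1.le
  have hsk : 0 ≤ sk := fun j => (hkpos j).2.le
  have hxks0 : 0 ≤ xk ⬝ᵥ s0 := dotProduct_nonneg_of_nonneg hxk fun j => (h0pos j).2.le
  have hskx0 : 0 ≤ sk ⬝ᵥ x0 := dotProduct_nonneg_of_nonneg hsk fun j => (h0pos j).1.le
  intro i
  exact ⟨le_div_inf'_of_dotProduct_le hxk (fun j => (h0pos j).2) (by linarith) i,
    le_div_inf'_of_dotProduct_le hsk (fun j => (h0pos j).1) (by linarith) i⟩
end

section
/- Under bounds C_min ≤ x_i, s_i ≤ C_max for all i and the Schur complement equation A X S^{-1} Aᵀ Δy = −A S^{-1}(X S e − σ μ e) with feasible residuals zero, the solution satisfies ||Δy|| ≤ (C_max λ_max / (C_min² λ_min²)) (1+σ) n μ, where λ_min, λ_max are the smallest and largest singular values of A and μ = xᵀs/n. -/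
/-!
Pair the Schur complement equation with `Δy`. Since the weights `xᵢ/sᵢ` are at least
`C_min/C_max`, the left side `Δyᵀ A X S⁻¹ Aᵀ Δy` is at least `(C_min/C_max) λ_min² ‖Δy‖²`,
while by Cauchy–Schwarz the right side is at most `‖Δy‖ λ_max ‖S⁻¹(XSe − σμe)‖`. The residual is
bounded through its ℓ¹ norm: `∑ |xᵢsᵢ − σμ| / sᵢ ≤ (xᵀs + nσμ)/C_min = (1+σ) n μ / C_min`.
-/

open Matrix Finset

section Euclidean

variable {ι : Type*} [Fintype ι]

lemma dotProduct_le_sqrt_mul_sqrt (u v : ι → ℝ) : u ⬝ᵥ v ≤ √(u ⬝ᵥ u) * √(v ⬝ᵥ v) := by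
  simpa only [dotProduct, sq] using Real.sum_mul_le_sqrt_mul_sqrt univ u v

lemma sqrt_dotProduct_self_le_sum_abs (v : ι → ℝ) : √(v ⬝ᵥ v) ≤ ∑ i, |v i| := by
  rw [Real.sqrt_le_iff]
  refine ⟨sum_nonneg fun i _ => abs_nonneg _, ?_⟩
  calc v ⬝ᵥ v = ∑ i, |v i| ^ 2 := sum_congr rfl fun i _ => by rw [sq_abs, sq]
    _ ≤ (∑ i, |v i|) ^ 2 := sum_sq_le_sq_sum_of_nonneg fun i _ => abs_nonneg _

lemma sum_abs_sub_div_le {p s : ι → ℝ} {c τ : ℝ} (hc : 0 < c) (hs : ∀ i, c ≤ s i)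
    (hp : ∀ i, 0 ≤ p i) (hτ : 0 ≤ τ) :
    ∑ i, |(p i - τ) / s i| ≤ (∑ i, p i + Fintype.card ι * τ) / c := by
  rw [← nsmul_eq_mul, ← card_univ, ← sum_const, ← sum_add_distrib, sum_div]
  refine sum_le_sum fun i _ => ?_
  have hsi : 0 < s i := hc.trans_le (hs i)
  rw [abs_div, abs_of_pos hsi]
  have hnum : |p i - τ| ≤ p i + τ := by
    rw [abs_le]; constructor <;> linarith [hp i]
  exact div_le_div₀ (by linarith [hp i]) hnum hc (hs i)

end Euclidean

section WeightedGram

variable {m n : Type*} [Fintype m] [Fintype n]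

lemma nonneg_of_sqrt_dotProduct_mulVec_le [Nonempty n] [DecidableEq n] (A : Matrix m n ℝ)
    {c : ℝ} (h : ∀ v, √(A *ᵥ v ⬝ᵥ A *ᵥ v) ≤ c * √(v ⬝ᵥ v)) : 0 ≤ c := by
  obtain ⟨i⟩ := ‹Nonempty n›
  have hv := h (Pi.single i 1)
  rw [single_dotProduct, Pi.single_eq_same, mul_one, Real.sqrt_one, mul_one] at hv
  exact (Real.sqrt_nonneg _).trans hv

variable [DecidableEq n]

lemma dotProduct_mul_diagonal_mul_transpose_mulVec {R : Type*} [CommRing R]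
    (A : Matrix m n R) (d : n → R) (z : m → R) :
    z ⬝ᵥ (A * diagonal d * Aᵀ) *ᵥ z = ∑ i, d i * (Aᵀ *ᵥ z) i ^ 2 := by
  rw [← mulVec_mulVec, ← mulVec_mulVec, dotProduct_mulVec, ← mulVec_transpose, dotProduct]
  exact sum_congr rfl fun i _ => by rw [mulVec_diagonal]; ring

lemma mul_dotProduct_le_dotProduct_mul_diagonal_mul_transpose_mulVec (A : Matrix m n ℝ)
    {d : n → ℝ} {c : ℝ} (hd : ∀ i, c ≤ d i) (z : m → ℝ) :
    c * (Aᵀ *ᵥ z ⬝ᵥ Aᵀ *ᵥ z) ≤ z ⬝ᵥ (A * diagonal d * Aᵀ) *ᵥ z := by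
  rw [dotProduct_mul_diagonal_mul_transpose_mulVec, dotProduct, mul_sum]
  exact sum_le_sum fun i _ => by
    rw [← sq]; exact mul_le_mul_of_nonneg_right (hd i) (sq_nonneg _)

theorem mul_sqrt_dotProduct_le_of_mul_diagonal_mul_transpose_mulVec_eq (A : Matrix m n ℝ)
    {d r : n → ℝ} {z : m → ℝ} {c lmin lmax : ℝ} (hc : 0 ≤ c) (hd : ∀ i, c ≤ d i)
    (hmin : lmin ^ 2 * (z ⬝ᵥ z) ≤ Aᵀ *ᵥ z ⬝ᵥ Aᵀ *ᵥ z)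
    (hmax : √(A *ᵥ r ⬝ᵥ A *ᵥ r) ≤ lmax * √(r ⬝ᵥ r))
    (heq : (A * diagonal d * Aᵀ) *ᵥ z = -(A *ᵥ r)) :
    c * lmin ^ 2 * √(z ⬝ᵥ z) ≤ lmax * √(r ⬝ᵥ r) := by
  have haa : √(z ⬝ᵥ z) * √(z ⬝ᵥ z) = z ⬝ᵥ z :=
    Real.mul_self_sqrt (sum_nonneg fun i _ => mul_self_nonneg (z i))
  set a := √(z ⬝ᵥ z)
  have ha : 0 ≤ a := Real.sqrt_nonneg _
  have hK : 0 ≤ lmax * √(r ⬝ᵥ r) := (Real.sqrt_nonneg _).trans hmax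
  have key : c * lmin ^ 2 * a * a ≤ lmax * √(r ⬝ᵥ r) * a := calc
    c * lmin ^ 2 * a * a = c * (lmin ^ 2 * (z ⬝ᵥ z)) := by
        rw [mul_assoc, haa]; ring
    _ ≤ c * (Aᵀ *ᵥ z ⬝ᵥ Aᵀ *ᵥ z) := mul_le_mul_of_nonneg_left hmin hc
    _ ≤ z ⬝ᵥ (A * diagonal d * Aᵀ) *ᵥ z :=
        mul_dotProduct_le_dotProduct_mul_diagonal_mul_transpose_mulVec A hd z
    _ = -z ⬝ᵥ A *ᵥ r := by rw [heq, dotProduct_neg, neg_dotProduct]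
    _ ≤ a * √(A *ᵥ r ⬝ᵥ A *ᵥ r) := by
        simpa only [neg_dotProduct, dotProduct_neg, neg_neg] using
          dotProduct_le_sqrt_mul_sqrt (-z) (A *ᵥ r)
    _ ≤ lmax * √(r ⬝ᵥ r) * a := by rw [mul_comm]; exact mul_le_mul_of_nonneg_right hmax ha
  rcases ha.eq_or_lt with ha0 | hapos
  · rwa [← ha0, mul_zero]
  · exact le_of_mul_le_mul_right key hapos

end WeightedGram

/-- Bound on the Newton step component `Δy`: under componentwise bounds
`C_min ≤ xᵢ, sᵢ ≤ C_max` and the Schur complement equation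
`A X S⁻¹ Aᵀ Δy = −A S⁻¹(XSe − σμe)`, one has
`‖Δy‖ ≤ (C_max λ_max / (C_min² λ_min²)) (1+σ) n μ`. -/
theorem newton_dy_bound {m n : ℕ} (A : Matrix (Fin m) (Fin n) ℝ)
    (x s : Fin n → ℝ) (dy : Fin m → ℝ)
    (Cmin Cmax lammin lammax σ μ : ℝ)
    (hCmin : 0 < Cmin) (hCC : Cmin ≤ Cmax)
    (hx : ∀ i, Cmin ≤ x i ∧ x i ≤ Cmax) (hs : ∀ i, Cmin ≤ s i ∧ s i ≤ Cmax)
    (hσ : 0 < σ ∧ σ ≤ 1) (hμ : μ = dotProduct x s / n)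
    (hlmin : 0 < lammin)
    (hsing1 : ∀ z : Fin m → ℝ, lammin ^ 2 * dotProduct z z ≤
      dotProduct (A.transpose.mulVec z) (A.transpose.mulVec z))
    (hsing2 : ∀ v : Fin n → ℝ, Real.sqrt (dotProduct (A.mulVec v) (A.mulVec v)) ≤
      lammax * Real.sqrt (dotProduct v v))
    (heq : (A * Matrix.diagonal x * Matrix.diagonal (fun i => (s i)⁻¹)
        * A.transpose).mulVec dy
      = - A.mulVec (fun i => (x i * s i - σ * μ) / s i)) :
    Real.sqrt (dotProduct dy dy) ≤
      Cmax * lammax / (Cmin ^ 2 * lammin ^ 2) * (1 + σ) * n * μ := by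
  have hCmax : 0 < Cmax := hCmin.trans_le hCC
  have hxs : ∀ i, 0 ≤ x i * s i := fun i =>
    (mul_pos (hCmin.trans_le (hx i).1) (hCmin.trans_le (hs i).1)).le
  have hμ0 : 0 ≤ μ := hμ ▸ div_nonneg (sum_nonneg fun i _ => hxs i) n.cast_nonneg
  have hnμ : (n : ℝ) * μ = x ⬝ᵥ s := by
    obtain rfl | hn := n.eq_zero_or_pos
    · simp [dotProduct]
    · rw [hμ, mul_div_cancel₀ _ (by positivity)]
  set r : Fin n → ℝ := fun i => (x i * s i - σ * μ) / s i
  have hweight : ∀ i, Cmin / Cmax ≤ x i * (s i)⁻¹ := fun i =>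
    div_le_div₀ (hCmin.trans_le (hx i).1).le (hx i).1 (hCmin.trans_le (hs i).1) (hs i).2
  rw [Matrix.mul_assoc A, diagonal_mul_diagonal] at heq
  have hdy := mul_sqrt_dotProduct_le_of_mul_diagonal_mul_transpose_mulVec_eq A
    (div_pos hCmin hCmax).le hweight (hsing1 dy) (hsing2 r) heq
  have hr : √(r ⬝ᵥ r) ≤ (1 + σ) * n * μ / Cmin := calc
    √(r ⬝ᵥ r) ≤ ∑ i, |r i| := sqrt_dotProduct_self_le_sum_abs r
    _ ≤ (x ⬝ᵥ s + n * (σ * μ)) / Cmin := by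
        simpa [r, dotProduct] using
          sum_abs_sub_div_le hCmin (fun i => (hs i).1) hxs (mul_nonneg hσ.1.le hμ0)
    _ = (1 + σ) * n * μ / Cmin := by rw [← hnμ]; ring
  have hlmax : lammax * √(r ⬝ᵥ r) ≤ lammax * ((1 + σ) * n * μ / Cmin) := by
    -- for `n = 0` nothing forces `lammax ≥ 0`, but then both sides vanish
    obtain rfl | hn := n.eq_zero_or_pos
    · simp [dotProduct]
    · have : Nonempty (Fin n) := ⟨⟨0, hn⟩⟩
      exact mul_le_mul_of_nonneg_left hr (nonneg_of_sqrt_dotProduct_mulVec_le A hsing2)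
  calc √(dy ⬝ᵥ dy)
        = Cmin / Cmax * lammin ^ 2 * √(dy ⬝ᵥ dy) * (Cmax / (Cmin * lammin ^ 2)) := by field_simp
    _ ≤ lammax * ((1 + σ) * n * μ / Cmin) * (Cmax / (Cmin * lammin ^ 2)) := by
        gcongr ?_ * _; exact hdy.trans hlmax
    _ = Cmax * lammax / (Cmin ^ 2 * lammin ^ 2) * (1 + σ) * n * μ := by
        field_simp
end

section
/- In the continuation Newton iteration z_{k+1} = z_k + (Δt/(1+Δt)) Δz_k with J(z_k)Δz_k = −F_σμ(z_k), the trust-region ratio ρ_k satisfies |ρ_k − 1| ≤ (Δt/(1+Δt)) · ||ΔX_k ΔS_k e|| / ||X_k s_k − σ_k μ_k e||, where ρ_k = (||F(z_k)|| − ||F(z_k + Δz̃_k)||)/(||F(z_k)|| − ||F(z_k) + J(z_k)Δz̃_k||), Δz̃_k = (Δt/(1+Δt))Δz_k. -/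
/-! With `α = Δt/(1+Δt)`, the Newton equation makes the complementarity residual after the damped
step exactly `(1 - α) r + α² ΔxΔs`, while the linear model predicts `(1 - α) r`. The predicted
reduction of `‖r‖` is therefore `α‖r‖`, and by the reverse triangle inequality the actual reduction
differs from it by at most `α²‖ΔxΔs‖`. -/

theorem sqrt_dotProduct_self_eq_norm_toLp {ι : Type*} [Fintype ι] (f : ι → ℝ) :
    √(f ⬝ᵥ f) = ‖WithLp.toLp 2 f‖ := by
  rw [norm_eq_sqrt_real_inner, EuclideanSpace.inner_toLp_toLp, star_trivial]

section TrustRegion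

variable {E : Type*} [SeminormedAddCommGroup E] [NormedSpace ℝ E]

/-- Actual over predicted reduction of the residual norm: `F₀ = F(z)`, `F₁ = F(z + Δz̃)` and
`L = F(z) + J(z)Δz̃`. -/
noncomputable def trustRegionRatio (F₀ F₁ L : E) : ℝ := (‖F₀‖ - ‖F₁‖) / (‖F₀‖ - ‖L‖)

theorem abs_trustRegionRatio_sub_one_le (r q : E) {α : ℝ} (hα : 0 < α) (hα1 : α ≤ 1)
    (hr : 0 < ‖r‖) :
    |trustRegionRatio r ((1 - α) • r + q) ((1 - α) • r) - 1| ≤ ‖q‖ / (α * ‖r‖) := by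
  have hpred : ‖r‖ - ‖(1 - α) • r‖ = α * ‖r‖ := by
    rw [norm_smul, Real.norm_of_nonneg (by linarith)]; ring
  have hpos : 0 < α * ‖r‖ := by positivity
  rw [trustRegionRatio, hpred, div_sub_one hpos.ne', abs_div, abs_of_pos hpos]
  gcongr
  calc |‖r‖ - ‖(1 - α) • r + q‖ - α * ‖r‖| = |‖(1 - α) • r‖ - ‖(1 - α) • r + q‖| := by
        rw [← hpred]; ring_nf
    _ ≤ ‖(1 - α) • r - ((1 - α) • r + q)‖ := abs_norm_sub_norm_le _ _
    _ = ‖q‖ := by rw [sub_add_cancel_left, norm_neg]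

end TrustRegion

theorem newton_step_complementarity {R : Type*} [CommRing R] {x s dx ds τ α : R}
    (hnewton : s * dx + x * ds = -(x * s - τ)) :
    (x + α * dx) * (s + α * ds) - τ = (1 - α) * (x * s - τ) + α ^ 2 * (dx * ds) := by
  linear_combination α * hnewton

theorem trust_region_ratio_bound_general {n : ℕ}
    (x dx s ds : Fin n → ℝ) (σ μ Δt ρ : ℝ)
    (hΔt : 0 < Δt)
    (hN3 : ∀ i, s i * dx i + x i * ds i = -(x i * s i - σ * μ))
    (rc : Fin n → ℝ) (hrc : rc = fun i => x i * s i - σ * μ)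
    (hrcpos : 0 < Real.sqrt (dotProduct rc rc))
    (hρ : ρ = (Real.sqrt (dotProduct rc rc) -
        Real.sqrt (dotProduct
          (fun i => (x i + Δt / (1 + Δt) * dx i) * (s i + Δt / (1 + Δt) * ds i) - σ * μ)
          (fun i => (x i + Δt / (1 + Δt) * dx i) * (s i + Δt / (1 + Δt) * ds i) - σ * μ))) /
      (Real.sqrt (dotProduct rc rc) -
        Real.sqrt (dotProduct (fun i => (1 - Δt / (1 + Δt)) * rc i)
          (fun i => (1 - Δt / (1 + Δt)) * rc i)))) :
    |ρ - 1| ≤ Δt / (1 + Δt) *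
      Real.sqrt (dotProduct (fun i => dx i * ds i) (fun i => dx i * ds i)) /
        Real.sqrt (dotProduct rc rc) := by
  set α := Δt / (1 + Δt)
  have hα : 0 < α := by positivity
  have hα1 : α ≤ 1 := (div_le_one (by positivity)).2 (by linarith)
  set w : Fin n → ℝ := fun i => dx i * ds i
  have hstep :
      (fun i => (x i + α * dx i) * (s i + α * ds i) - σ * μ) = (1 - α) • rc + α ^ 2 • w := by
    funext i
    simpa [hrc, w] using newton_step_complementarity (α := α) (hN3 i)
  have hlin : (fun i => (1 - α) * rc i) = (1 - α) • rc := rfl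
  simp only [hstep, hlin, sqrt_dotProduct_self_eq_norm_toLp, WithLp.toLp_add, WithLp.toLp_smul]
    at hρ hrcpos ⊢
  rw [hρ]
  refine (abs_trustRegionRatio_sub_one_le _ _ hα hα1 hrcpos).trans_eq ?_
  rw [norm_smul, Real.norm_of_nonneg (by positivity)]
  field_simp

/-- Trust-region ratio estimate for the continuation Newton iteration
`z_{k+1} = z_k + (Δt/(1+Δt))Δz_k`: for a primal-dual feasible iterate, the ratio `ρ_k`
satisfies `|ρ_k − 1| ≤ (Δt/(1+Δt)) ‖ΔX_kΔS_ke‖ / ‖X_ks_k − σ_kμ_ke‖`. -/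
theorem trust_region_ratio_bound {m n : ℕ} (A : Matrix (Fin m) (Fin n) ℝ)
    (b : Fin m → ℝ) (c : Fin n → ℝ)
    (x dx s ds : Fin n → ℝ) (y dy : Fin m → ℝ) (σ μ Δt ρ : ℝ)
    (hΔt : 0 < Δt)
    (hfeas1 : A.mulVec x = b) (hfeas2 : A.transpose.mulVec y + s = c)
    (hN1 : A.mulVec dx = 0) (hN2 : A.transpose.mulVec dy + ds = 0)
    (hN3 : ∀ i, s i * dx i + x i * ds i = -(x i * s i - σ * μ))
    (rc : Fin n → ℝ) (hrc : rc = fun i => x i * s i - σ * μ)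
    (hrcpos : 0 < Real.sqrt (dotProduct rc rc))
    (hρ : ρ = (Real.sqrt (dotProduct rc rc) -
        Real.sqrt (dotProduct
          (fun i => (x i + Δt / (1 + Δt) * dx i) * (s i + Δt / (1 + Δt) * ds i) - σ * μ)
          (fun i => (x i + Δt / (1 + Δt) * dx i) * (s i + Δt / (1 + Δt) * ds i) - σ * μ))) /
      (Real.sqrt (dotProduct rc rc) -
        Real.sqrt (dotProduct (fun i => (1 - Δt / (1 + Δt)) * rc i)
          (fun i => (1 - Δt / (1 + Δt)) * rc i)))) :
    |ρ - 1| ≤ Δt / (1 + Δt) *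
      Real.sqrt (dotProduct (fun i => dx i * ds i) (fun i => dx i * ds i)) /
        Real.sqrt (dotProduct rc rc) :=
  trust_region_ratio_bound_general x dx s ds σ μ Δt ρ hΔt hN3 rc hrc hrcpos hρ
end

section
/- If (x̃, ỹ, s̃) satisfies the KKT conditions of the reduced LP: R₁x̃ = b_r, R₁ᵀỹ + s̃ = c_r, x̃ᵢs̃ᵢ = 0 for all i, x̃, s̃ ≥ 0, where b_r = Q₁ᵀb, c_r = Pᵀc, and the constraints of the original problem are consistent (rank(A, b) = rank(A)), then (x, y, s) = (P x̃, Q₁ ỹ, P s̃) satisfies the KKT conditions of the original LP: Ax = b, Aᵀy + s = c, xᵢsᵢ = 0, x, s ≥ 0. -/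
/-!
Writing `A = Q₁R₁Pᵀ`, primal feasibility is `A(Px̃) = Q₁R₁x̃ = Q₁Q₁ᵀb = b`, which is exactly where
consistency enters. For the dual, `AᵀQ₁ = PR₁ᵀQ₁ᵀQ₁ = PR₁ᵀ`, so `AᵀQ₁ỹ + Ps̃ = P(R₁ᵀỹ + s̃) = PPᵀc = c`.
Complementarity and nonnegativity are coordinatewise, hence invariant under the permutation `P`.
-/

open Matrix

lemma Equiv.Perm.permMatrix_mul_transpose {n R : Type*} [Fintype n] [DecidableEq n]
    [NonAssocSemiring R] (σ : Equiv.Perm n) : σ.permMatrix R * (σ.permMatrix R)ᵀ = 1 := by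
  rw [transpose_permMatrix, ← permMatrix_mul, inv_mul_cancel, permMatrix_one]

lemma Matrix.transpose_mul_eq_of_mul_eq_mul {m n k R : Type*} [Fintype m] [Fintype n] [Fintype k]
    [DecidableEq n] [DecidableEq k] [CommSemiring R] {A : Matrix m n R} {P : Matrix n n R}
    {Q : Matrix m k R} {B : Matrix k n R} (hP : P * Pᵀ = 1) (hQ : Qᵀ * Q = 1)
    (hAP : A * P = Q * B) : Aᵀ * Q = P * Bᵀ :=
  calc Aᵀ * Q = P * (A * P)ᵀ * Q := by rw [transpose_mul, ← Matrix.mul_assoc, hP, Matrix.one_mul]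
    _ = P * Bᵀ * (Qᵀ * Q) := by rw [hAP, transpose_mul]; simp only [Matrix.mul_assoc]
    _ = P * Bᵀ := by rw [hQ, Matrix.mul_one]

theorem reduced_kkt_recovers_original_general {m n r : ℕ} (A : Matrix (Fin m) (Fin n) ℝ)
    (b : Fin m → ℝ) (c : Fin n → ℝ)
    (Q1 : Matrix (Fin m) (Fin r) ℝ) (R1 : Matrix (Fin r) (Fin n) ℝ)
    (π : Equiv.Perm (Fin n))
    (hQ : Q1.transpose * Q1 = 1)
    (hAP : A * π.permMatrix ℝ = Q1 * R1)
    (hcons : Q1.mulVec (Q1.transpose.mulVec b) = b)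
    (xt : Fin n → ℝ) (yt : Fin r → ℝ) (st : Fin n → ℝ)
    (h1 : R1.mulVec xt = Q1.transpose.mulVec b)
    (h2 : R1.transpose.mulVec yt + st = (π.permMatrix ℝ).transpose.mulVec c)
    (h3 : ∀ i, xt i * st i = 0)
    (h4 : 0 ≤ xt) (h5 : 0 ≤ st) :
    A.mulVec ((π.permMatrix ℝ).mulVec xt) = b ∧
      A.transpose.mulVec (Q1.mulVec yt) + (π.permMatrix ℝ).mulVec st = c ∧
      (∀ i, ((π.permMatrix ℝ).mulVec xt) i * ((π.permMatrix ℝ).mulVec st) i = 0) ∧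
      0 ≤ (π.permMatrix ℝ).mulVec xt ∧ 0 ≤ (π.permMatrix ℝ).mulVec st := by
  have hP := π.permMatrix_mul_transpose (R := ℝ)
  refine ⟨?_, ?_, ?_, ?_, ?_⟩
  · rw [mulVec_mulVec, hAP, ← mulVec_mulVec, h1, hcons]
  · rw [mulVec_mulVec, transpose_mul_eq_of_mul_eq_mul hP hQ hAP, ← mulVec_mulVec, ← mulVec_add,
      h2, mulVec_mulVec, hP, one_mulVec]
  all_goals simp only [permMatrix_mulVec]
  · exact fun i => h3 (π i)
  · exact fun i => h4 (π i)
  · exact fun i => h5 (π i)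

/-- Recovering a KKT point of the original LP from a KKT point of the reduced LP:
if `(x̃, ỹ, s̃)` satisfies the KKT conditions of the reduced problem
(`R₁x̃ = Q₁ᵀb`, `R₁ᵀỹ + s̃ = Pᵀc`, complementarity, nonnegativity) and the original
constraints are consistent (`Q₁Q₁ᵀb = b`), then `(Px̃, Q₁ỹ, Ps̃)` satisfies the KKT
conditions of the original LP. -/
theorem reduced_kkt_recovers_original {m n r : ℕ} (A : Matrix (Fin m) (Fin n) ℝ)
    (b : Fin m → ℝ) (c : Fin n → ℝ)
    (Q1 : Matrix (Fin m) (Fin r) ℝ) (R1 : Matrix (Fin r) (Fin n) ℝ)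
    (π : Equiv.Perm (Fin n))
    (hQ : Q1.transpose * Q1 = 1)
    (hAP : A * π.permMatrix ℝ = Q1 * R1)
    (hR1rank : R1.rank = r)
    (hcons : Q1.mulVec (Q1.transpose.mulVec b) = b)
    (xt : Fin n → ℝ) (yt : Fin r → ℝ) (st : Fin n → ℝ)
    (h1 : R1.mulVec xt = Q1.transpose.mulVec b)
    (h2 : R1.transpose.mulVec yt + st = (π.permMatrix ℝ).transpose.mulVec c)
    (h3 : ∀ i, xt i * st i = 0)
    (h4 : 0 ≤ xt) (h5 : 0 ≤ st) :
    A.mulVec ((π.permMatrix ℝ).mulVec xt) = b ∧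
      A.transpose.mulVec (Q1.mulVec yt) + (π.permMatrix ℝ).mulVec st = c ∧
      (∀ i, ((π.permMatrix ℝ).mulVec xt) i * ((π.permMatrix ℝ).mulVec st) i = 0) ∧
      0 ≤ (π.permMatrix ℝ).mulVec xt ∧ 0 ≤ (π.permMatrix ℝ).mulVec st :=
  reduced_kkt_recovers_original_general A b c Q1 R1 π hQ hAP hcons xt yt st h1 h2 h3 h4 h5
end
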